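/- arXiv:1805.08532 — 7 statements merged into one kernel-verified Lean document; each statement's English description precedes it below -/
import Mathlib

section
/- A matrix A over a field K is MDS (i.e., the code generated by (I | A) is maximum-distance separable) if and only if every square submatrix of A is invertible. -/
/-!
Both sides say that no nonzero codeword `(x, x ᵥ* A)` has weight at most `k`. If `x ≠ 0` is
supported on `s` rows and `x ᵥ* A` has weight at most `k - s`, then `x ᵥ* A` vanishes on `s`
columns, and `x` restricted to those rows is a nonzero left kernel vector of the `s × s`
submatrix they cut out. Conversely a left kernel vector of a singular `s × s` submatrix,
extended by zero, is such an `x`.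
-/

open Function Matrix

section HammingNorm

variable {β m n : Type*} [Zero β] [DecidableEq β] [Fintype m] [Fintype n]

theorem hammingNorm_le_card_of_support_subset_range {r : m → n} {x : n → β}
    (hx : ∀ i ∉ Set.range r, x i = 0) : hammingNorm x ≤ Fintype.card m := by
  classical
  calc hammingNorm x ≤ (Finset.univ.image r).card :=
        Finset.card_le_card fun i hi => by
          by_contra h
          exact (Finset.mem_filter.1 hi).2 (hx i (by simpa using h))
    _ ≤ Fintype.card m := Finset.card_image_le

theorem hammingNorm_add_card_le_of_comp_eq_zero {c : m → n} (hc : Injective c) {y : n → β}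
    (hy : ∀ j, y (c j) = 0) : hammingNorm y + Fintype.card m ≤ Fintype.card n := by
  classical
  have hdisj : Disjoint ({i | y i ≠ 0} : Finset n) (Finset.univ.image c) :=
    Finset.disjoint_left.2 fun i hi hc' => by
      obtain ⟨j, -, rfl⟩ := Finset.mem_image.1 hc'
      exact (Finset.mem_filter.1 hi).2 (hy j)
  calc hammingNorm y + Fintype.card m
      = (({i | y i ≠ 0} : Finset n) ∪ Finset.univ.image c).card := by
        rw [Finset.card_union_of_disjoint hdisj, Finset.card_image_of_injective _ hc]
        rfl
    _ ≤ Fintype.card n := Finset.card_le_univ _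

theorem exists_injective_support_subset_range (x : n → β) :
    ∃ r : Fin (hammingNorm x) → n, Injective r ∧ ∀ i ∉ Set.range r, x i = 0 := by
  let S : Finset n := {i | x i ≠ 0}
  let e : Fin (hammingNorm x) ≃ S := S.equivFin.symm
  refine ⟨Subtype.val ∘ e, Subtype.val_injective.comp e.injective, fun i hi => ?_⟩
  by_contra hxi
  exact hi ⟨e.symm ⟨i, Finset.mem_filter.2 ⟨Finset.mem_univ i, hxi⟩⟩, by simp⟩

theorem exists_injective_comp_eq_zero {a : ℕ} (y : n → β)
    (h : a + hammingNorm y ≤ Fintype.card n) : ∃ c : Fin a → n, Injective c ∧ ∀ j, y (c j) = 0 := by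
  have hcard : Fintype.card (Fin a) ≤ Fintype.card {i // y i = 0} := by
    have := Finset.card_filter_add_card_filter_not (s := Finset.univ) (fun i => y i = 0)
    rw [Fintype.card_subtype, Fintype.card_fin]
    simp only [Finset.card_univ] at this
    simp only [hammingNorm, ne_eq] at h
    omega
  obtain ⟨e⟩ := Function.Embedding.nonempty_of_card_le hcard
  exact ⟨Subtype.val ∘ e, Subtype.val_injective.comp e.injective, fun j => (e j).2⟩

end HammingNorm

section Submatrix

variable {m n o p : Type*} [Fintype m] [Fintype n]

theorem vecMul_submatrix_comp_of_support_subset_range {R : Type*} [NonUnitalNonAssocSemiring R]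
    {r : m → n} (hr : Injective r) (c : o → p) {x : n → R} (hx : ∀ i ∉ Set.range r, x i = 0)
    (A : Matrix n p R) (j : o) :
    ((x ∘ r) ᵥ* A.submatrix r c) j = (x ᵥ* A) (c j) := by
  simp only [vecMul, dotProduct, submatrix_apply, Function.comp_apply]
  exact Fintype.sum_of_injective r hr _ _ (fun i hi => by simp [hx i hi]) fun _ => rfl

theorem exists_support_subset_range_vecMul_comp_eq_zero_iff {R : Type*} [CommRing R]
    [IsDomain R] [DecidableEq m] {r : m → n} (hr : Injective r) (c : m → p) (A : Matrix n p R) :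
    (∃ x : n → R, x ≠ 0 ∧ (∀ i ∉ Set.range r, x i = 0) ∧ ∀ j, (x ᵥ* A) (c j) = 0) ↔
      (A.submatrix r c).det = 0 := by
  rw [← exists_vecMul_eq_zero_iff]
  constructor
  · rintro ⟨x, hx0, hxr, hxc⟩
    refine ⟨x ∘ r, fun h => hx0 (funext fun i => ?_), funext fun j => ?_⟩
    · by_cases hi : i ∈ Set.range r
      · obtain ⟨i, rfl⟩ := hi
        exact congrFun h i
      · exact hxr i hi
    · rw [vecMul_submatrix_comp_of_support_subset_range hr c hxr, hxc, Pi.zero_apply]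
  · rintro ⟨y, hy0, hy⟩
    have hxr : ∀ i ∉ Set.range r, extend r y 0 i = 0 := fun i hi => by
      simp [extend_apply' _ _ _ fun h => hi (Set.mem_range.2 h)]
    refine ⟨extend r y 0, fun h => hy0 ?_, hxr, fun j => ?_⟩
    · rw [← extend_comp hr y 0, h]
      rfl
    · rw [← vecMul_submatrix_comp_of_support_subset_range hr c hxr, extend_comp hr, hy,
        Pi.zero_apply]

end Submatrix

/-- A matrix `A` over a field `K` is MDS (the code generated by `(I | A)` is
maximum-distance separable, i.e. every nonzero codeword `(x, x·A)` has Hamming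
weight at least `k+1`) if and only if every square submatrix of `A` is invertible. -/
theorem stmt0 {K : Type*} [Field K] [DecidableEq K] {k : ℕ}
    (A : Matrix (Fin k) (Fin k) K) :
    (∀ x : Fin k → K, x ≠ 0 →
      (Finset.univ.filter fun i => x i ≠ 0).card +
        (Finset.univ.filter fun j => Matrix.vecMul x A j ≠ 0).card ≥ k + 1) ↔
    (∀ (s : ℕ) (r c : Fin s → Fin k), Function.Injective r → Function.Injective c →
      (A.submatrix r c).det ≠ 0) := by
  change (∀ x : Fin k → K, x ≠ 0 → hammingNorm x + hammingNorm (x ᵥ* A) ≥ k + 1) ↔ _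
  constructor
  · intro hMDS s r c hr hc hdet
    obtain ⟨x, hx0, hxr, hxc⟩ :=
      (exists_support_subset_range_vecMul_comp_eq_zero_iff hr c A).2 hdet
    have hx := hammingNorm_le_card_of_support_subset_range hxr
    have hxA := hammingNorm_add_card_le_of_comp_eq_zero hc hxc
    have := hMDS x hx0
    simp only [Fintype.card_fin] at hx hxA
    omega
  · intro hdet x hx0
    by_contra! hlt
    obtain ⟨r, hr, hxr⟩ := exists_injective_support_subset_range x
    obtain ⟨c, hc, hxc⟩ := exists_injective_comp_eq_zero (a := hammingNorm x) (x ᵥ* A)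
      (by rw [Fintype.card_fin]; omega)
    exact hdet _ r c hr hc
      ((exists_support_subset_range_vecMul_comp_eq_zero_iff hr c A).1 ⟨x, hx0, hxr, hxc⟩)
end

section
/- Let x_1,...,x_d, y_1,...,y_d be 2d distinct non-zero elements of a field K, and define A ∈ K^{d×d} by A_{i,j} = x_i/(x_i - y_j). Then every square submatrix of the (d+1)×d matrix obtained by prepending a row of all ones to A is invertible. -/
/-!
Parametrise the rows of `γ` by `u₀ = 0` and `uᵢ = xᵢ⁻¹`. Then both kinds of entry equal
`(uᵢ - yⱼ⁻¹)⁻¹ (-yⱼ)⁻¹`, so every square submatrix of `γ` is a Cauchy matrix `((aᵢ - bⱼ)⁻¹)` times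
an invertible diagonal matrix, with distinct `aᵢ`, distinct `bⱼ` and `aᵢ ≠ bⱼ`. A Cauchy matrix
is invertible: if `∑ⱼ wⱼ / (aᵢ - bⱼ) = 0` for all `i`, the barycentric form of Lagrange
interpolation turns this into a polynomial of degree `< n` through the nodes `bⱼ` vanishing at the
`n` points `aᵢ`; it is therefore zero, and so are its values `wⱼ ∏_{k ≠ j} (bⱼ - bₖ)`.
-/

open Polynomial Finset Lagrange

namespace Matrix

def cauchy {m n F : Type*} [Field F] (a : m → F) (b : n → F) : Matrix m n F :=
  of fun i j => (a i - b j)⁻¹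

theorem det_cauchy_ne_zero {n F : Type*} [Fintype n] [DecidableEq n] [Field F] {a b : n → F}
    (ha : Function.Injective a) (hb : Function.Injective b) (hab : ∀ i j, a i ≠ b j) :
    (cauchy a b).det ≠ 0 := by
  rw [Ne, ← exists_mulVec_eq_zero_iff]
  rintro ⟨w, hw, hmul⟩
  set p := interpolate univ b fun j => w j / nodalWeight univ b j
  have hroots : ∀ i ∈ univ, p.eval (a i) = 0 := fun i _ => by
    rw [eval_interpolate_not_at_node _ fun j _ => hab i j]
    have := congrFun hmul i
    simp only [mulVec, dotProduct, cauchy, of_apply, Pi.zero_apply] at this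
    rw [← mul_zero (eval (a i) (nodal univ b)), ← this]
    congr 1
    refine sum_congr rfl fun j _ => ?_
    field_simp [nodalWeight_ne_zero hb.injOn (mem_univ j)]
  have hp : p = 0 := eq_zero_of_degree_lt_of_eval_index_eq_zero _ ha.injOn
    (degree_interpolate_lt _ hb.injOn) hroots
  refine hw (funext fun j => ?_)
  have hnode : p.eval (b j) = w j / nodalWeight univ b j :=
    eval_interpolate_at_node _ hb.injOn (mem_univ j)
  rw [hp, eval_zero, eq_comm, div_eq_zero_iff] at hnode
  exact hnode.resolve_right (nodalWeight_ne_zero hb.injOn (mem_univ j))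

end Matrix

theorem mul_inv_sub_eq_inv_sub_inv_inv_mul_neg_inv {K : Type*} [Field K] {a b : K} (ha : a ≠ 0)
    (hb : b ≠ 0) : a * (a - b)⁻¹ = (a⁻¹ - b⁻¹)⁻¹ * (-b)⁻¹ := by
  rw [inv_sub_inv ha hb, inv_div, ← neg_sub a b, div_neg, neg_mul, ← mul_neg, ← inv_neg, neg_neg,
    div_mul_eq_mul_div, mul_assoc, mul_inv_cancel₀ hb, mul_one, div_eq_mul_inv]

open Matrix

theorem stmt2_general {K : Type*} [Field K] {d : ℕ} (x y : Fin d → K)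
    (hx0 : ∀ i, x i ≠ 0) (hy0 : ∀ i, y i ≠ 0)
    (hdist : Function.Injective (Sum.elim x y)) :
    ∀ (s : ℕ) (r : Fin s → Fin (d + 1)) (c : Fin s → Fin d),
      Function.Injective r → Function.Injective c →
      ((Matrix.of fun i j =>
          Fin.cases (motive := fun _ => K) 1
            (fun i' => x i' * (x i' - y j)⁻¹) i).submatrix r c).det ≠ 0 := by
  intro s r c hr hc
  have hxy : ∀ i j, x i ≠ y j := fun i j h => Sum.inl_ne_inr (hdist h)
  set u : Fin (d + 1) → K := Fin.cons 0 fun i => (x i)⁻¹ with u_def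
  have hu : Function.Injective u := Fin.cons_injective_iff.2
    ⟨fun ⟨i, hi⟩ => hx0 i (inv_eq_zero.1 hi), inv_injective.comp (hdist.comp Sum.inl_injective)⟩
  have huy : ∀ i j, u i ≠ (y j)⁻¹ := fun i j => by
    induction i using Fin.cases with
    | zero => exact (inv_ne_zero (hy0 j)).symm
    | succ i => exact inv_injective.ne (hxy i j)
  have hdet :
      (cauchy (u ∘ r) (fun j => (y (c j))⁻¹) * diagonal fun j => (-y (c j))⁻¹).det ≠ 0 := by
    rw [det_mul, det_diagonal]
    exact mul_ne_zero
      (det_cauchy_ne_zero (hu.comp hr) (inv_injective.comp ((hdist.comp Sum.inr_injective).comp hc))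
        fun _ _ => huy _ _)
      (prod_ne_zero_iff.2 fun j _ => inv_ne_zero (neg_ne_zero.2 (hy0 _)))
  convert hdet using 2
  ext i j
  rw [mul_diagonal, submatrix_apply, of_apply, cauchy, of_apply, Function.comp_apply]
  induction r i using Fin.cases with
  | zero => rw [Fin.cases_zero, u_def, Fin.cons_zero, zero_sub, inv_neg, inv_inv,
      mul_inv_cancel₀ (neg_ne_zero.2 (hy0 _))]
  | succ k => rw [Fin.cases_succ, u_def, Fin.cons_succ,
      mul_inv_sub_eq_inv_sub_inv_inv_mul_neg_inv (hx0 k) (hy0 (c j))]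

/-- Let `x_1,…,x_d, y_1,…,y_d` be `2d` distinct non-zero field elements and
`A_{i,j} = x_i / (x_i - y_j)`. Then every square submatrix of the `(d+1)×d`
matrix `γ` obtained by prepending a row of all ones to `A` is invertible. -/
theorem stmt2 {K : Type*} [Field K] {d : ℕ} (hd : 1 ≤ d) (x y : Fin d → K)
    (hx0 : ∀ i, x i ≠ 0) (hy0 : ∀ i, y i ≠ 0)
    (hdist : Function.Injective (Sum.elim x y)) :
    ∀ (s : ℕ) (r : Fin s → Fin (d + 1)) (c : Fin s → Fin d),
      Function.Injective r → Function.Injective c →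
      ((Matrix.of fun i j =>
          Fin.cases (motive := fun _ => K) 1
            (fun i' => x i' * (x i' - y j)⁻¹) i).submatrix r c).det ≠ 0 :=
  stmt2_general x y hx0 hy0 hdist
end

section
/- Let x_1,...,x_d, y_1,...,y_d be 2d distinct non-zero elements of a field K, and define A ∈ K^{d×d} by A_{i,j} = x_i/(x_i - y_j). Let C = J - A where J is the all-ones d×d matrix. Then every square submatrix of the (d+1)×d matrix obtained by prepending a row of all ones to C is invertible. -/
/-!
Put `z = (0, x₁, …, x_d)`. Every entry of the bordered matrix is `-y_j (z_i - y_j)⁻¹`, the border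
row being the case `z₀ = 0`, so each square submatrix is a Cauchy matrix `((a_i - b_j)⁻¹)` with
nonzero column factors, and `a`, `b` injective with disjoint ranges. Such a Cauchy matrix is
nonsingular: for a kernel vector `v`, the barycentric Lagrange formula shows that the interpolant
of the values `v_j / w_j` at the nodes `b_j` (`w_j` the nodal weights) vanishes at every `a_i`;
having degree below the number of these roots, it is zero, and so is `v`.
-/

open Polynomial Lagrange Finset Function Matrix

theorem Matrix.det_cauchy_ne_zero_s3 {K ι : Type*} [Field K] [Fintype ι] [DecidableEq ι]
    {a b : ι → K} (ha : Injective a) (hb : Injective b) (hab : ∀ i j, a i ≠ b j) :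
    (of fun i j => (a i - b j)⁻¹).det ≠ 0 := by
  intro hdet
  obtain ⟨v, hv, hv0⟩ := exists_mulVec_eq_zero_iff.2 hdet
  have hw : ∀ j, nodalWeight univ b j ≠ 0 := fun j => nodalWeight_ne_zero hb.injOn (mem_univ j)
  set r : ι → K := fun j => v j / nodalWeight univ b j
  have hroots : ∀ i ∈ univ, (interpolate univ b r).eval (a i) = 0 := fun i _ => by
    have hsum : ∑ j, nodalWeight univ b j * (a i - b j)⁻¹ * r j =
        ((of fun i j => (a i - b j)⁻¹) *ᵥ v) i :=
      sum_congr rfl fun j _ => by simp only [r, of_apply]; field_simp [hw j]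
    rw [eval_interpolate_not_at_node r fun j _ => hab i j, hsum, hv0, Pi.zero_apply, mul_zero]
  have hp : interpolate univ b r = 0 :=
    eq_zero_of_degree_lt_of_eval_index_eq_zero univ ha.injOn (degree_interpolate_lt r hb.injOn)
      hroots
  refine hv (funext fun j => ?_)
  have hrj := eval_interpolate_at_node r hb.injOn (mem_univ j)
  rw [hp, eval_zero] at hrj
  exact (div_eq_zero_iff.1 hrj.symm).resolve_right (hw j)

theorem stmt3_general {K : Type*} [Field K] {d : ℕ} (x y : Fin d → K)
    (hx0 : ∀ i, x i ≠ 0) (hy0 : ∀ i, y i ≠ 0)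
    (hdist : Function.Injective (Sum.elim x y)) :
    ∀ (s : ℕ) (r : Fin s → Fin (d + 1)) (c : Fin s → Fin d),
      Function.Injective r → Function.Injective c →
      ((Matrix.of fun i j =>
          Fin.cases (motive := fun _ => K) 1
            (fun i' => 1 - x i' * (x i' - y j)⁻¹) i).submatrix r c).det ≠ 0 := by
  intro s r c hr hc
  obtain ⟨hx, hy, hxy⟩ := Sum.elim_injective.1 hdist
  set z : Fin (d + 1) → K := Fin.cons 0 x
  have hz : Injective z := Fin.cons_injective_iff.2 ⟨fun ⟨i, hi⟩ => hx0 i hi, hx⟩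
  have hzy : ∀ i j, z i ≠ y j := Fin.cases (fun j => (hy0 j).symm) hxy
  have hentries : (of fun i j => Fin.cases (motive := fun _ => K) 1
      (fun i' => 1 - x i' * (x i' - y j)⁻¹) i) = of fun i j => -y j * (z i - y j)⁻¹ := by
    ext i j
    cases i using Fin.cases with
    | zero => simp [z, hy0 j]
    | succ i =>
      have hne := sub_ne_zero.2 (hxy i j)
      simp only [of_apply, Fin.cases_succ, z, Fin.cons_succ]
      field_simp
      ring
  have hsub : (of fun i j => -y j * (z i - y j)⁻¹).submatrix r c =
      of fun i j => -y (c j) * (of fun i j => (z (r i) - y (c j))⁻¹) i j := rfl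
  rw [hentries, hsub, det_mul_row]
  exact mul_ne_zero (prod_ne_zero_iff.2 fun j _ => neg_ne_zero.2 (hy0 (c j)))
    (det_cauchy_ne_zero_s3 (hz.comp hr) (hy.comp hc) fun i j => hzy (r i) (c j))

/-- Let `x_1,…,x_d, y_1,…,y_d` be `2d` distinct non-zero field elements,
`A_{i,j} = x_i / (x_i - y_j)`, and `C = J - A` where `J` is the all-ones matrix.
Then every square submatrix of the `(d+1)×d` matrix obtained by prepending a
row of all ones to `C` is invertible. -/
theorem stmt3 {K : Type*} [Field K] {d : ℕ} (hd : 1 ≤ d) (x y : Fin d → K)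
    (hx0 : ∀ i, x i ≠ 0) (hy0 : ∀ i, y i ≠ 0)
    (hdist : Function.Injective (Sum.elim x y)) :
    ∀ (s : ℕ) (r : Fin s → Fin (d + 1)) (c : Fin s → Fin d),
      Function.Injective r → Function.Injective c →
      ((Matrix.of fun i j =>
          Fin.cases (motive := fun _ => K) 1
            (fun i' => 1 - x i' * (x i' - y j)⁻¹) i).submatrix r c).det ≠ 0 :=
  stmt3_general x y hx0 hy0 hdist
end

section
/- Let x_1,...,x_{d+1}, y_1,...,y_d be 2d+1 distinct elements of a field K and let A ∈ K^{(d+1)×d} be the Cauchy matrix A_{i,j} = 1/(x_i - y_j). Then the left kernel of A has dimension exactly one, and every non-zero vector in the left kernel of A has all coordinates non-zero (full Hamming weight). -/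
/-! If `c` lies in the left kernel of the Cauchy matrix and vanishes outside a set `s` of at most
as many rows as there are columns, interpolate the values `c i / w i` at the nodes `x i`, `i ∈ s`,
where `w` are the barycentric weights. By the first barycentric formula the interpolant takes the
value `nodal s x (y j) * ∑ i, c i / (y j - x i) = 0` at every `y j`, so, having degree `< #s`, it
is zero, and evaluating it at the nodes gives `c = 0`. Hence a non-zero left-kernel vector of a
`(d+1) × d` Cauchy matrix has no zero coordinate, so any coordinate embeds the kernel into `K`,
while rank–nullity bounds its dimension from below by `1`. -/

open Polynomial Lagrange Finset Matrix

section

variable {K ι κ : Type*} [Field K] [Fintype ι] [Fintype κ]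

def cauchyMatrix (x : ι → K) (y : κ → K) : Matrix ι κ K := of fun i j => (x i - y j)⁻¹

theorem eq_zero_of_vecMul_cauchyMatrix_eq_zero [DecidableEq ι] {x : ι → K} {y : κ → K}
    {s : Finset ι} (hx : Set.InjOn x s) (hy : Function.Injective y)
    (hxy : ∀ i ∈ s, ∀ j, x i ≠ y j) (hs : #s ≤ Fintype.card κ) {c : ι → K}
    (hcs : ∀ i ∉ s, c i = 0) (hc : vecMul c (cauchyMatrix x y) = 0) : c = 0 := by
  set r : ι → K := fun i => c i * (nodalWeight s x i)⁻¹
  have hP : interpolate s x r = 0 := by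
    refine eq_zero_of_degree_lt_of_eval_index_eq_zero univ hy.injOn ?_ fun j _ => ?_
    · exact (degree_interpolate_lt _ hx).trans_le (by simpa using hs)
    · have hsum : ∑ i ∈ s, c i * (x i - y j)⁻¹ = 0 := by
        have := congrFun hc j
        simp only [vecMul, dotProduct, cauchyMatrix, of_apply, Pi.zero_apply] at this
        rwa [← sum_subset (subset_univ s) fun i _ hi => by rw [hcs i hi, zero_mul]] at this
      have hbary : ∑ i ∈ s, nodalWeight s x i * (y j - x i)⁻¹ * r i =
          -∑ i ∈ s, c i * (x i - y j)⁻¹ := by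
        rw [← sum_neg_distrib]
        refine sum_congr rfl fun i hi => ?_
        have hw := nodalWeight_ne_zero hx hi
        have hxy' := sub_ne_zero.2 (hxy i hi j)
        rw [← neg_sub, inv_neg]
        simp only [r]
        field_simp
      rw [eval_interpolate_not_at_node r fun i hi => (hxy i hi j).symm, hbary, hsum, neg_zero,
        mul_zero]
  funext i
  by_cases hi : i ∈ s
  · have := eval_interpolate_at_node r hx hi
    rw [hP, eval_zero] at this
    simpa [r, nodalWeight_ne_zero hx hi] using this.symm
  · exact hcs i hi

theorem eq_zero_of_vecMul_cauchyMatrix_eq_zero_of_apply_eq_zero {x : ι → K} {y : κ → K}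
    (hx : Function.Injective x) (hy : Function.Injective y) (hxy : ∀ i j, x i ≠ y j)
    (hcard : Fintype.card ι ≤ Fintype.card κ + 1) {c : ι → K}
    (hc : vecMul c (cauchyMatrix x y) = 0) {i : ι} (hci : c i = 0) : c = 0 := by
  classical
  refine eq_zero_of_vecMul_cauchyMatrix_eq_zero (s := univ.erase i) hx.injOn hy
    (fun i _ j => hxy i j) ?_ (fun k hk => ?_) hc
  · rw [card_erase_of_mem (mem_univ i), card_univ]
    omega
  · obtain rfl : k = i := by simpa using hk
    exact hci

theorem finrank_ker_vecMulLinear_cauchyMatrix {x : ι → K} {y : κ → K}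
    (hx : Function.Injective x) (hy : Function.Injective y) (hxy : ∀ i j, x i ≠ y j)
    (hcard : Fintype.card ι = Fintype.card κ + 1) :
    Module.finrank K (LinearMap.ker (vecMulLinear (cauchyMatrix x y))) = 1 := by
  set f := vecMulLinear (cauchyMatrix x y)
  refine le_antisymm ?_ ?_
  · obtain ⟨i⟩ : Nonempty ι := Fintype.card_pos_iff.1 (by omega)
    have hinj : Function.Injective ((LinearMap.proj i).comp (LinearMap.ker f).subtype) := by
      rw [← LinearMap.ker_eq_bot, LinearMap.ker_eq_bot']
      rintro ⟨c, hc⟩ hci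
      exact Subtype.ext (eq_zero_of_vecMul_cauchyMatrix_eq_zero_of_apply_eq_zero hx hy hxy
        hcard.le hc hci)
    simpa using LinearMap.finrank_le_finrank_of_injective hinj
  · have hrank := LinearMap.finrank_range_add_finrank_ker f
    have hrange := Submodule.finrank_le (LinearMap.range f)
    rw [Module.finrank_fintype_fun_eq_card] at hrank hrange
    omega

end

theorem stmt4_general {K : Type*} [Field K] {d : ℕ}
    (x : Fin (d + 1) → K) (y : Fin d → K)
    (hdist : Function.Injective (Sum.elim x y)) :
    Module.finrank K
        (LinearMap.ker (Matrix.vecMulLinear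
          (Matrix.of fun i j => (x i - y j)⁻¹ : Matrix (Fin (d + 1)) (Fin d) K))) = 1 ∧
    ∀ c : Fin (d + 1) → K,
      Matrix.vecMul c (Matrix.of fun i j => (x i - y j)⁻¹) = 0 → c ≠ 0 →
      ∀ i, c i ≠ 0 := by
  have hx : Function.Injective x := hdist.comp Sum.inl_injective
  have hy : Function.Injective y := hdist.comp Sum.inr_injective
  have hxy : ∀ i j, x i ≠ y j := fun i j h => Sum.inl_ne_inr (hdist h)
  have hcard : Fintype.card (Fin (d + 1)) = Fintype.card (Fin d) + 1 := by simp
  refine ⟨finrank_ker_vecMulLinear_cauchyMatrix hx hy hxy hcard, fun c hc hc0 i hci => ?_⟩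
  exact hc0 (eq_zero_of_vecMul_cauchyMatrix_eq_zero_of_apply_eq_zero hx hy hxy hcard.le hc hci)

/-- For a `(d+1)×d` Cauchy matrix `A_{i,j} = (x_i - y_j)⁻¹` built from `2d+1`
pairwise distinct elements, the left kernel of `A` has dimension exactly one,
and every non-zero vector of the left kernel has all coordinates non-zero. -/
theorem stmt4 {K : Type*} [Field K] {d : ℕ} (hd : 1 ≤ d)
    (x : Fin (d + 1) → K) (y : Fin d → K)
    (hdist : Function.Injective (Sum.elim x y)) :
    Module.finrank K
        (LinearMap.ker (Matrix.vecMulLinear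
          (Matrix.of fun i j => (x i - y j)⁻¹ : Matrix (Fin (d + 1)) (Fin d) K))) = 1 ∧
    ∀ c : Fin (d + 1) → K,
      Matrix.vecMul c (Matrix.of fun i j => (x i - y j)⁻¹) = 0 → c ≠ 0 →
      ∀ i, c i ≠ 0 :=
  stmt4_general x y hdist
end

section
/- Let x_1,...,x_{d+1}, y_1,...,y_d be 2d+1 distinct elements of a field K, A the (d+1)×d Cauchy matrix with A_{i,j} = 1/(x_i - y_j), and c = (c_1,...,c_{d+1}) a non-zero vector in the left kernel of A. Then the matrix γ with γ_{i,j} = c_i/(x_i - y_j) satisfies: (1) the rows of γ sum to the zero vector, and (2) every square submatrix of γ is invertible. -/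
/-!
A square Cauchy matrix with distinct nodes is nonsingular: if `∑ⱼ vⱼ / (t - yⱼ)` vanishes at
every `xᵢ`, then by the barycentric form of Lagrange interpolation so does the interpolant of the
values `vⱼ / wⱼ` at the nodes `yⱼ` (`wⱼ` the nodal weights); having degree `< n` and `n` roots,
it is zero, hence so are all `vⱼ`.
Deleting row `i` of `A` leaves a nonsingular square Cauchy matrix, so `cᵢ = 0` would force
`c = 0`. Thus every `cᵢ ≠ 0`, and a square submatrix of `γ` is a nonsingular Cauchy matrix with
its rows scaled by non-zero factors.
-/

open Finset Lagrange Polynomial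

namespace Matrix

variable {K : Type*} [Field K]

theorem det_cauchy_ne_zero_s5 {ι : Type*} [Fintype ι] [DecidableEq ι] {x y : ι → K}
    (hx : Function.Injective x) (hy : Function.Injective y) (hxy : ∀ i j, x i ≠ y j) :
    (of fun i j => (x i - y j)⁻¹).det ≠ 0 := by
  rw [Ne, ← exists_mulVec_eq_zero_iff]
  rintro ⟨v, hv, hAv⟩
  set r : ι → K := fun j => (nodalWeight univ y j)⁻¹ * v j
  have hr_eval : ∀ i, (interpolate univ y r).eval (x i) = 0 := fun i => by
    rw [eval_interpolate_not_at_node r fun j _ => hxy i j]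
    have hsum : ∑ j, (x i - y j)⁻¹ * v j = 0 := by
      simpa [mulVec, dotProduct] using congrFun hAv i
    refine mul_eq_zero_of_right _ (Eq.trans (sum_congr rfl fun j _ => ?_) hsum)
    simp only [r]
    rw [mul_right_comm, mul_inv_cancel_left₀ (nodalWeight_ne_zero hy.injOn (mem_univ j)), mul_comm]
  have hr_zero : interpolate univ y r = 0 :=
    eq_zero_of_degree_lt_of_eval_index_eq_zero univ hx.injOn
      (degree_interpolate_lt r hy.injOn) fun i _ => hr_eval i
  refine hv (funext fun j => ?_)
  have hrj : r j = 0 := by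
    rw [← eval_interpolate_at_node r hy.injOn (mem_univ j), hr_zero, eval_zero]
  simpa [r, nodalWeight_ne_zero hy.injOn (mem_univ j)] using hrj

theorem apply_ne_zero_of_vecMul_eq_zero {n : ℕ} {M : Matrix (Fin (n + 1)) (Fin n) K}
    (hM : ∀ i : Fin (n + 1), (M.submatrix i.succAbove id).det ≠ 0)
    {c : Fin (n + 1) → K} (hc : c ≠ 0) (hcM : c ᵥ* M = 0) (i : Fin (n + 1)) : c i ≠ 0 := by
  intro hci
  have hc_succAbove : c ∘ i.succAbove ᵥ* M.submatrix i.succAbove id = 0 := by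
    ext k
    simpa [vecMul, dotProduct, Fin.sum_univ_succAbove _ i, hci] using congrFun hcM k
  have hc_restrict : c ∘ i.succAbove = 0 := by
    by_contra hne
    exact hM i (exists_vecMul_eq_zero_iff.mp ⟨_, hne, hc_succAbove⟩)
  exact hc (funext ((Fin.forall_iff_succAbove i).mpr ⟨hci, congrFun hc_restrict⟩))

end Matrix

open Matrix in
theorem stmt5_general {K : Type*} [Field K] {d : ℕ}
    (x : Fin (d + 1) → K) (y : Fin d → K)
    (hdist : Function.Injective (Sum.elim x y))
    (c : Fin (d + 1) → K) (hc : c ≠ 0)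
    (hker : Matrix.vecMul c (Matrix.of fun i j => (x i - y j)⁻¹) = 0) :
    (∀ j, ∑ i, (c i * (x i - y j)⁻¹) = 0) ∧
    (∀ (s : ℕ) (r : Fin s → Fin (d + 1)) (co : Fin s → Fin d),
      Function.Injective r → Function.Injective co →
      ((Matrix.of fun i j => c i * (x i - y j)⁻¹).submatrix r co).det ≠ 0) := by
  obtain ⟨hx, hy, hxy⟩ := Sum.elim_injective.mp hdist
  refine ⟨fun j => by simpa [vecMul, dotProduct] using congrFun hker j,
    fun s r co hr hco => ?_⟩
  have hc_ne : ∀ i, c i ≠ 0 :=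
    apply_ne_zero_of_vecMul_eq_zero (M := of fun i j => (x i - y j)⁻¹)
      (fun i => det_cauchy_ne_zero_s5 (hx.comp Fin.succAbove_right_injective) hy
        fun _ _ => hxy _ _) hc hker
  calc _ = (∏ i, c (r i)) * (of fun i j => (x (r i) - y (co j))⁻¹).det :=
        det_mul_column (fun i => c (r i)) (of fun i j => (x (r i) - y (co j))⁻¹)
    _ ≠ 0 := mul_ne_zero (prod_ne_zero_iff.mpr fun i _ => hc_ne (r i))
        (det_cauchy_ne_zero_s5 (hx.comp hr) (hy.comp hco) fun _ _ => hxy _ _)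

/-- Let `A` be the `(d+1)×d` Cauchy matrix `A_{i,j} = (x_i - y_j)⁻¹` built from
`2d+1` pairwise distinct elements, and `c ≠ 0` a vector in the left kernel of
`A`. Then `γ_{i,j} = c_i (x_i - y_j)⁻¹` has rows summing to zero, and every
square submatrix of `γ` is invertible. -/
theorem stmt5 {K : Type*} [Field K] {d : ℕ} (hd : 1 ≤ d)
    (x : Fin (d + 1) → K) (y : Fin d → K)
    (hdist : Function.Injective (Sum.elim x y))
    (c : Fin (d + 1) → K) (hc : c ≠ 0)
    (hker : Matrix.vecMul c (Matrix.of fun i j => (x i - y j)⁻¹) = 0) :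
    (∀ j, ∑ i, (c i * (x i - y j)⁻¹) = 0) ∧
    (∀ (s : ℕ) (r : Fin s → Fin (d + 1)) (co : Fin s → Fin d),
      Function.Injective r → Function.Injective co →
      ((Matrix.of fun i j => c i * (x i - y j)⁻¹).submatrix r co).det ≠ 0) :=
  stmt5_general x y hdist c hc hker
end

section
/- Let A ∈ K^{n×ℓ} and B ∈ K^{m×ℓ}. Suppose that for every selection P of at most n columns (from the ℓ columns), the matrix product B·P composed with a basis of the right kernel of A·P has at least one zero row. Then for every vector v in the right kernel of A with Hamming weight at most n, the vector B·v has at least one zero coordinate. -/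
/-! Restricting `v` to its support `c` turns it into a vector of the kernel of `A.submatrix id c`
without changing `A *ᵥ v` or `B *ᵥ v`. That kernel vector is `Kb *ᵥ x` for a kernel basis `Kb`, so
`B *ᵥ v = (B.submatrix id c * Kb) *ᵥ x`, and a zero row of that product is a zero coordinate. -/

/-- `Kb` is a kernel basis of `M`: its columns are linearly independent and
span the right kernel of `M`. -/
def IsKernelBasis {K : Type*} [Field K] {n k t : ℕ}
    (M : Matrix (Fin n) (Fin k) K) (Kb : Matrix (Fin k) (Fin t) K) : Prop :=
  Function.Injective Kb.mulVecLin ∧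
    LinearMap.range Kb.mulVecLin = LinearMap.ker M.mulVecLin

open Matrix

theorem Matrix.submatrix_id_mulVec_comp {R m k ℓ : Type*} [NonUnitalNonAssocSemiring R]
    [Fintype k] [Fintype ℓ] (M : Matrix m ℓ R) {c : k → ℓ} (hc : Function.Injective c)
    {v : ℓ → R} (hv : ∀ i ∉ Set.range c, v i = 0) :
    M.submatrix id c *ᵥ (v ∘ c) = M *ᵥ v :=
  funext fun i => Fintype.sum_of_injective c hc _ _ (fun j hj => by simp [hv j hj]) fun _ => rfl

theorem exists_isKernelBasis {K : Type*} [Field K] {n k : ℕ} (M : Matrix (Fin n) (Fin k) K) :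
    ∃ t, ∃ Kb : Matrix (Fin k) (Fin t) K, IsKernelBasis M Kb := by
  let W := LinearMap.ker M.mulVecLin
  let f := W.subtype ∘ₗ (Module.finBasis K W).equivFun.symm.toLinearMap
  refine ⟨_, LinearMap.toMatrix' f, ?_⟩
  rw [IsKernelBasis, ← Matrix.toLin'_apply', Matrix.toLin'_toMatrix']
  refine ⟨W.injective_subtype.comp (LinearEquiv.injective _), ?_⟩
  rw [LinearMap.range_comp_of_range_eq_top _ (LinearEquiv.range _), Submodule.range_subtype]

theorem IsKernelBasis.mulVec_apply_eq_zero {K : Type*} [Field K] {n k t p : ℕ}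
    {M : Matrix (Fin n) (Fin k) K} {Kb : Matrix (Fin k) (Fin t) K} (hKb : IsKernelBasis M Kb)
    {N : Matrix (Fin p) (Fin k) K} {i : Fin p} (hi : ∀ j, (N * Kb) i j = 0)
    {w : Fin k → K} (hw : M *ᵥ w = 0) : (N *ᵥ w) i = 0 := by
  obtain ⟨x, rfl⟩ : w ∈ LinearMap.range Kb.mulVecLin := hKb.2 ▸ hw
  rw [Matrix.mulVecLin_apply, Matrix.mulVec_mulVec]
  simp [Matrix.mulVec, dotProduct, hi]

/-- safe′(A,B) ⇒ safe(A,B): if for every selection of at most `n` columns the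
product of the selected columns of `B` with a kernel basis of the selected
columns of `A` has a zero row, then for every `v ∈ ker A` of Hamming weight at
most `n`, the vector `B·v` has a zero coordinate. -/
theorem stmt6 {K : Type*} [Field K] [DecidableEq K] {n m ℓ : ℕ}
    (A : Matrix (Fin n) (Fin ℓ) K) (B : Matrix (Fin m) (Fin ℓ) K)
    (h : ∀ (k : ℕ), k ≤ n → ∀ (c : Fin k → Fin ℓ), Function.Injective c →
      ∀ (t : ℕ) (Kb : Matrix (Fin k) (Fin t) K),
        IsKernelBasis (A.submatrix id c) Kb →
        ∃ i, ∀ j, ((B.submatrix id c) * Kb) i j = 0) :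
    ∀ v : Fin ℓ → K, A.mulVec v = 0 →
      (Finset.univ.filter fun i => v i ≠ 0).card ≤ n →
      ∃ i, B.mulVec v i = 0 := by
  intro v hv hcard
  set s := Finset.univ.filter fun i => v i ≠ 0
  let c := s.orderEmbOfFin rfl
  have hsupp : ∀ i ∉ Set.range c, v i = 0 := by simp [c, s]
  obtain ⟨t, Kb, hKb⟩ := exists_isKernelBasis (A.submatrix id c)
  obtain ⟨i, hi⟩ := h s.card hcard c c.injective t Kb hKb
  refine ⟨i, ?_⟩
  rw [← B.submatrix_id_mulVec_comp c.injective hsupp]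
  exact hKb.mulVec_apply_eq_zero hi (by rw [A.submatrix_id_mulVec_comp c.injective hsupp, hv])
end

section
/- Let A ∈ K^{n×ℓ} and B ∈ K^{m×ℓ} over a field K with at least m+1 elements. Suppose that for every vector v in the right kernel of A with Hamming weight at most n, the vector B·v has at least one zero coordinate. Then for every selection P of at most n columns, the matrix B·P · kbasis(A·P) has at least one zero row, where kbasis(A·P) is any matrix whose columns form a basis of the right kernel of A·P. -/
open MvPolynomial Matrix Finset

theorem Matrix.toMvPolynomial_ne_zero {R m n : Type*} [CommSemiring R] [Fintype n]
    [DecidableEq n] {M : Matrix m n R} {i : m} (hi : M i ≠ 0) : M.toMvPolynomial i ≠ 0 := by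
  intro h0
  refine hi (funext fun j => ?_)
  simpa [toMvPolynomial_eval_eq_apply] using congrArg (eval (Pi.single j 1)) h0

theorem Matrix.exists_forall_mulVec_ne_zero {R m n : Type*} [CommRing R] [IsDomain R]
    [Fintype m] [Fintype n] (hR : (Fintype.card m : Cardinal) ≤ Cardinal.mk R)
    (M : Matrix m n R) (hM : ∀ i, M i ≠ 0) : ∃ w, ∀ i, (M *ᵥ w) i ≠ 0 := by
  classical
  have hF : (∏ i, M.toMvPolynomial i).IsHomogeneous (Fintype.card m) := by
    simpa [← card_univ] using
      IsHomogeneous.prod _ _ (fun _ => 1) fun i _ => M.toMvPolynomial_isHomogeneous i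
  have hF0 : ∏ i, M.toMvPolynomial i ≠ 0 :=
    prod_ne_zero_iff.mpr fun i _ => toMvPolynomial_ne_zero (hM i)
  obtain ⟨w, hw⟩ : ∃ w, eval w (∏ i, M.toMvPolynomial i) ≠ 0 := by
    by_contra! h
    exact hF0 (hF.eq_zero_of_forall_eval_eq_zero_of_le_card h hR)
  refine ⟨w, fun i => ?_⟩
  rw [map_prod, prod_ne_zero_iff] at hw
  simpa [toMvPolynomial_eval_eq_apply] using hw i (mem_univ i)

theorem Matrix.mulVec_extend_zero {R ι κ m : Type*} [CommSemiring R] [Fintype ι] [Fintype κ]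
    {c : κ → ι} (hc : c.Injective) (M : Matrix m ι R) (u : κ → R) :
    M *ᵥ c.extend u 0 = M.submatrix id c *ᵥ u := by
  ext i
  refine (Fintype.sum_of_injective c hc _ _ (fun j hj => ?_) fun a => ?_).symm
  · simp [Function.extend_apply' _ _ _ hj]
  · simp [hc.extend_apply]

theorem card_filter_extend_zero_ne_zero_le {R ι κ : Type*} [Zero R] [Fintype ι] [Fintype κ]
    [DecidableEq ι] [DecidableEq R] (c : κ → ι) (u : κ → R) :
    #{j | c.extend u 0 j ≠ 0} ≤ Fintype.card κ := by
  calc #{j | c.extend u 0 j ≠ 0} ≤ #(univ.image c) := by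
        refine card_le_card fun j hj => ?_
        obtain ⟨a, -, rfl⟩ := Function.support_extend_zero_subset (mem_filter.mp hj).2
        exact mem_image_of_mem c (mem_univ a)
    _ ≤ Fintype.card κ := card_image_le

/-- safe(A,B) ⇒ safe′(A,B) over a field with at least `m+1` elements: if every
`v ∈ ker A` of Hamming weight at most `n` gives a zero coordinate in `B·v`,
then for every selection of at most `n` columns, the product of the selected
columns of `B` with a kernel basis of the selected columns of `A` has a zero
row. -/
theorem stmt7 {K : Type*} [Field K] [DecidableEq K] {n m ℓ : ℕ}
    (hK : (m + 1 : Cardinal) ≤ Cardinal.mk K)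
    (A : Matrix (Fin n) (Fin ℓ) K) (B : Matrix (Fin m) (Fin ℓ) K)
    (h : ∀ v : Fin ℓ → K, A.mulVec v = 0 →
      (Finset.univ.filter fun i => v i ≠ 0).card ≤ n →
      ∃ i, B.mulVec v i = 0) :
    ∀ (k : ℕ), k ≤ n → ∀ (c : Fin k → Fin ℓ), Function.Injective c →
      ∀ (t : ℕ) (Kb : Matrix (Fin k) (Fin t) K),
        IsKernelBasis (A.submatrix id c) Kb →
        ∃ i, ∀ j, ((B.submatrix id c) * Kb) i j = 0 := by
  intro k hk c hc t Kb hKb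
  by_contra! hrows
  obtain ⟨w, hw⟩ := (B.submatrix id c * Kb).exists_forall_mulVec_ne_zero
    (by simpa using le_self_add.trans hK)
    fun i hi => by simpa [hi] using hrows i
  have hker : A.submatrix id c *ᵥ (Kb *ᵥ w) = 0 :=
    LinearMap.mem_ker.mp (hKb.2 ▸ LinearMap.mem_range_self Kb.mulVecLin w)
  obtain ⟨i, hi⟩ := h (c.extend (Kb *ᵥ w) 0) (by rw [mulVec_extend_zero hc, hker])
    ((card_filter_extend_zero_ne_zero_le c _).trans (by simpa using hk))
  exact hw i (by rwa [mulVec_extend_zero hc, mulVec_mulVec] at hi)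
end
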